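/- Let 1/2 < α < 1 and ν > 0, and let ω : ℕ → ℝ satisfy ω(N) → ∞ and ω(N) = o(R) as N → ∞. Then with probability tending to 1 as N → ∞, the random hyperbolic graph G(N;α,ν) contains a vertex u with radius r_u ≤ (2α−1)R/(2α) + ω(N); in particular t_u ≥ R/2 for N large (so u is in the core), and u is adjacent to every other vertex v with type t_v ≥ (2α−1)R/(2α) + ω(N). -/

import Mathlib

open MeasureTheory Real Filter

noncomputable section

/-- The cosh of the hyperbolic distance between two points of the hyperbolic plane
given in polar coordinates `(r, θ)`, via the hyperbolic law of cosines. -/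
def coshDist (p q : ℝ × ℝ) : ℝ :=
  Real.cosh p.1 * Real.cosh q.1 - Real.sinh p.1 * Real.sinh q.1 * Real.cos (p.2 - q.2)

lemma coshDist_symm (p q : ℝ × ℝ) : coshDist p q = coshDist q p := by
  unfold coshDist
  rw [show p.2 - q.2 = -(q.2 - p.2) by ring, Real.cos_neg]
  ring

/-- The hyperbolic random graph on `Fin N` determined by the vertex positions `pos`
(in polar coordinates): two distinct vertices are adjacent iff their hyperbolic distance
is at most `R`, equivalently iff the cosh of their distance is at most `cosh R`. -/
def hypGraph (N : ℕ) (R : ℝ) (pos : Fin N → ℝ × ℝ) : SimpleGraph (Fin N) where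
  Adj i j := i ≠ j ∧ coshDist (pos i) (pos j) ≤ Real.cosh R
  symm := by
    constructor
    intro i j h
    exact ⟨h.1.symm, by rw [coshDist_symm]; exact h.2⟩
  loopless := ⟨fun i h => h.1 rfl⟩

/-- The density `α sinh(α r) / (cosh(α R) - 1)` of the radius of a vertex. -/
def radiusDensity (α R r : ℝ) : ℝ :=
  if 0 ≤ r ∧ r ≤ R then α * Real.sinh (α * r) / (Real.cosh (α * R) - 1) else 0

/-- The joint density of the polar coordinates (radius, angle) of a vertex:
the radius has density `radiusDensity α R` and the angle is uniform on `[0, 2π)`. -/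
def vertexDensity (α R : ℝ) (p : ℝ × ℝ) : ℝ :=
  radiusDensity α R p.1 * (if 0 ≤ p.2 ∧ p.2 < 2 * π then 1 / (2 * π) else 0)

/-- The distribution of the position of a single vertex. -/
def vertexMeasure (α R : ℝ) : Measure (ℝ × ℝ) :=
  volume.withDensity fun p => ENNReal.ofReal (vertexDensity α R p)

/-- `R = R(N) = 2 log (N/ν)`. -/
def Rof (ν : ℝ) (N : ℕ) : ℝ := 2 * Real.log (N / ν)

/-- The joint distribution of the `N` i.i.d. vertex positions of `G(N; α, ν)`. -/
def configMeasure (α ν : ℝ) (N : ℕ) : Measure (Fin N → ℝ × ℝ) :=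
  Measure.pi fun _ => vertexMeasure α (Rof ν N)

/-
A vertex `i` of radius `r_i ≤ ρ` and a vertex `j` of radius `r_j ≤ R - ρ` are adjacent: the
hyperbolic law of cosines with `cos ≥ -1` bounds their distance by `r_i + r_j ≤ R`. So it suffices
that some vertex has radius at most `ρ = (2α-1)R/(2α) + ω`. A single vertex does so with
probability `F = (cosh αρ - 1)/(cosh αR - 1) ≥ e^{α(ρ-R)}/2 - e^{-αR}`, and with `e^{R/2} = N/ν`
this gives `N F ≥ ν e^{αω}/2 - ν^{2α} → ∞` once `α ≥ 1/2`. Hence no vertex has radius at most `ρ`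
with probability `(1 - F)^N ≤ e^{-N F} → 0`.
-/

/-- The probability that a vertex has radius at most `ρ`, for `0 ≤ ρ ≤ R`. -/
def radiusCDF (α R ρ : ℝ) : ℝ :=
  (cosh (α * ρ) - 1) / (cosh (α * R) - 1)

section VertexMeasure

variable {α R : ℝ}

lemma cosh_mul_sub_one_pos (hα : 0 < α) (hR : 0 < R) : 0 < cosh (α * R) - 1 := by
  linarith [one_lt_cosh.2 (by positivity : α * R ≠ 0)]

lemma radiusDensity_nonneg (hα : 0 ≤ α) (r : ℝ) : 0 ≤ radiusDensity α R r := by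
  unfold radiusDensity
  split_ifs with h
  · exact div_nonneg (mul_nonneg hα (sinh_nonneg_iff.2 (mul_nonneg hα h.1)))
      (sub_nonneg.2 (one_le_cosh _))
  · rfl

lemma measurable_radiusDensity : Measurable (radiusDensity α R) :=
  Measurable.ite measurableSet_Icc (by fun_prop) measurable_const

lemma setLIntegral_radiusDensity_Ioc (hα : 0 ≤ α) {a b : ℝ} (ha : 0 ≤ a) (hab : a ≤ b)
    (hbR : b ≤ R) :
    ∫⁻ r in Set.Ioc a b, ENNReal.ofReal (radiusDensity α R r)
      = ENNReal.ofReal ((cosh (α * b) - cosh (α * a)) / (cosh (α * R) - 1)) := by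
  set f : ℝ → ℝ := fun r => α * sinh (α * r) / (cosh (α * R) - 1)
  have hf : Continuous f := by fun_prop
  have hderiv : ∀ x ∈ Set.uIcc a b,
      HasDerivAt (fun r => cosh (α * r) / (cosh (α * R) - 1)) (f x) x := fun x _ => by
    have h := (((hasDerivAt_id x).const_mul α).cosh).div_const (cosh (α * R) - 1)
    simp only [id, mul_one] at h
    exact h.congr_deriv (by simp only [f]; ring)
  rw [setLIntegral_congr_fun measurableSet_Ioc (g := fun r => ENNReal.ofReal (f r))
      fun r hr => by rw [radiusDensity, if_pos ⟨ha.trans hr.1.le, hr.2.trans hbR⟩],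
    ← ofReal_integral_eq_lintegral_ofReal hf.integrableOn_Ioc
      (ae_restrict_of_forall_mem measurableSet_Ioc fun r hr => by
        simpa [f, radiusDensity, ha.trans hr.1.le, hr.2.trans hbR] using
          radiusDensity_nonneg (R := R) hα r),
    ← intervalIntegral.integral_of_le hab,
    intervalIntegral.integral_eq_sub_of_hasDerivAt hderiv (hf.intervalIntegrable a b),
    sub_div]

lemma vertexMeasure_fst_preimage (hα : 0 ≤ α) {T : Set ℝ} (hT : MeasurableSet T) :
    vertexMeasure α R (Prod.fst ⁻¹' T)
      = ∫⁻ r in T ∩ Set.Icc 0 R, ENNReal.ofReal (radiusDensity α R r) := by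
  set angle : ℝ → ENNReal := fun θ =>
    ENNReal.ofReal (if 0 ≤ θ ∧ θ < 2 * π then 1 / (2 * π) else 0)
  have hangle_meas : Measurable angle :=
    (Measurable.ite measurableSet_Ico measurable_const measurable_const).ennreal_ofReal
  have hangle : ∫⁻ θ, angle θ = 1 := by
    have : angle = (Set.Ico 0 (2 * π)).indicator fun _ => ENNReal.ofReal (1 / (2 * π)) := by
      ext θ
      simp only [angle, Set.indicator_apply, Set.mem_Ico]
      split_ifs <;> simp
    rw [this, lintegral_indicator measurableSet_Ico, setLIntegral_const, volume_Ico,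
      ← ENNReal.ofReal_mul (by positivity), sub_zero, one_div_mul_cancel (by positivity),
      ENNReal.ofReal_one]
  have hradial : (fun r => ENNReal.ofReal (radiusDensity α R r))
      = (Set.Icc 0 R).indicator fun r => ENNReal.ofReal (radiusDensity α R r) := by
    ext r
    by_cases hr : r ∈ Set.Icc 0 R
    · rw [Set.indicator_of_mem hr]
    · rw [Set.indicator_of_notMem hr, radiusDensity, if_neg (show ¬(0 ≤ r ∧ r ≤ R) from hr),
        ENNReal.ofReal_zero]
  have hsplit : (fun p : ℝ × ℝ => ENNReal.ofReal (vertexDensity α R p))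
      = fun p => ENNReal.ofReal (radiusDensity α R p.1) * angle p.2 := by
    ext p
    rw [vertexDensity, ENNReal.ofReal_mul (radiusDensity_nonneg hα p.1)]
  rw [vertexMeasure, withDensity_apply _ (hT.preimage measurable_fst),
    show Prod.fst ⁻¹' T = T ×ˢ (Set.univ : Set ℝ) by ext; simp,
    Measure.volume_eq_prod, ← Measure.prod_restrict, Measure.restrict_univ, hsplit,
    lintegral_prod_mul measurable_radiusDensity.ennreal_ofReal.aemeasurable
      hangle_meas.aemeasurable,
    hangle, mul_one]
  conv_lhs => rw [hradial]
  rw [lintegral_indicator measurableSet_Icc,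
    Measure.restrict_restrict measurableSet_Icc, Set.inter_comm]

instance sigmaFinite_vertexMeasure : SigmaFinite (vertexMeasure α R) := by
  unfold vertexMeasure
  infer_instance

lemma isProbabilityMeasure_vertexMeasure (hα : 0 < α) (hR : 0 < R) :
    IsProbabilityMeasure (vertexMeasure α R) := by
  constructor
  rw [← Set.preimage_univ, vertexMeasure_fst_preimage hα.le MeasurableSet.univ, Set.univ_inter,
    Measure.restrict_congr_set Ioc_ae_eq_Icc.symm,
    setLIntegral_radiusDensity_Ioc hα.le le_rfl hR.le le_rfl, mul_zero, cosh_zero,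
    div_self (cosh_mul_sub_one_pos hα hR).ne', ENNReal.ofReal_one]

lemma ae_vertexMeasure_radius_nonneg (hα : 0 ≤ α) : ∀ᵐ p ∂vertexMeasure α R, 0 ≤ p.1 := by
  rw [ae_iff]
  simp only [not_le]
  change vertexMeasure α R (Prod.fst ⁻¹' Set.Iio 0) = 0
  rw [vertexMeasure_fst_preimage hα measurableSet_Iio,
    show Set.Iio (0 : ℝ) ∩ Set.Icc 0 R = ∅ from
      Set.eq_empty_of_forall_notMem fun x hx => not_le.2 hx.1 hx.2.1,
    Measure.restrict_empty, lintegral_zero_measure]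

lemma vertexMeasure_radius_gt (hα : 0 < α) (hR : 0 < R) {ρ : ℝ} (hρ : 0 ≤ ρ) :
    vertexMeasure α R (Prod.fst ⁻¹' Set.Ioi ρ) = ENNReal.ofReal (1 - radiusCDF α R ρ) := by
  have hc := cosh_mul_sub_one_pos hα hR
  rw [vertexMeasure_fst_preimage hα.le measurableSet_Ioi]
  rcases le_or_gt ρ R with hρR | hRρ
  · rw [show Set.Ioi ρ ∩ Set.Icc 0 R = Set.Ioc ρ R by
        ext x
        simp only [Set.mem_inter_iff, Set.mem_Ioi, Set.mem_Icc, Set.mem_Ioc]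
        exact ⟨fun h => ⟨h.1, h.2.2⟩, fun h => ⟨h.1, hρ.trans h.1.le, h.2⟩⟩,
      setLIntegral_radiusDensity_Ioc hα.le hρ hρR le_rfl, radiusCDF]
    congr 1
    field_simp
    ring
  · rw [show Set.Ioi ρ ∩ Set.Icc 0 R = ∅ from
        Set.eq_empty_of_forall_notMem fun x hx => not_le.2 (hRρ.trans hx.1) hx.2.2,
      Measure.restrict_empty, lintegral_zero_measure, eq_comm, ENNReal.ofReal_eq_zero,
      sub_nonpos, radiusCDF, le_div_iff₀ hc, one_mul]
    exact sub_le_sub_right (cosh_strictMonoOn.monotoneOn (by positivity : 0 ≤ α * R)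
      (by positivity : 0 ≤ α * ρ) (by gcongr)) 1

end VertexMeasure

lemma one_sub_pow_le_pi_exists_mem {ι X : Type*} [Fintype ι] [MeasurableSpace X]
    (μ : Measure X) [IsProbabilityMeasure μ] (s : Set X) :
    1 - μ sᶜ ^ Fintype.card ι ≤ Measure.pi (fun _ : ι => μ) {x | ∃ i, x i ∈ s} := by
  have hcover : Set.univ ⊆ {x : ι → X | ∃ i, x i ∈ s} ∪ Set.univ.pi fun _ => sᶜ := by
    intro x _
    by_cases h : ∃ i, x i ∈ s
    · exact Or.inl h
    · exact Or.inr fun i _ => fun hi => h ⟨i, hi⟩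
  have h := (measure_mono (μ := Measure.pi fun _ : ι => μ) hcover).trans (measure_union_le _ _)
  rw [measure_univ, Measure.pi_pi, Finset.prod_const, Finset.card_univ] at h
  exact tsub_le_iff_right.2 h

section Configuration

variable {α R : ℝ}

lemma one_sub_exp_le_pi_exists_radius_le (hα : 0 < α) (hR : 0 < R) {ρ : ℝ} (hρ : 0 ≤ ρ)
    (N : ℕ) :
    1 - ENNReal.ofReal (exp (-(N * radiusCDF α R ρ)))
      ≤ Measure.pi (fun _ : Fin N => vertexMeasure α R) {pos | ∃ i, (pos i).1 ≤ ρ} := by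
  have := isProbabilityMeasure_vertexMeasure hα hR
  have htail : vertexMeasure α R (Prod.fst ⁻¹' Set.Iic ρ)ᶜ ^ N
      ≤ ENNReal.ofReal (exp (-(N * radiusCDF α R ρ))) := by
    rw [← Set.preimage_compl, Set.compl_Iic, vertexMeasure_radius_gt hα hR hρ, neg_mul_eq_mul_neg,
      exp_nat_mul, ENNReal.ofReal_pow (exp_pos _).le]
    gcongr
    exact one_sub_le_exp_neg _
  refine le_trans (tsub_le_tsub_left htail 1) ?_
  simpa using
    one_sub_pow_le_pi_exists_mem (ι := Fin N) (vertexMeasure α R) (Prod.fst ⁻¹' Set.Iic ρ)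

lemma ae_pi_radius_nonneg (hα : 0 ≤ α) (N : ℕ) :
    ∀ᵐ pos ∂Measure.pi (fun _ : Fin N => vertexMeasure α R), ∀ j, 0 ≤ (pos j).1 :=
  eventually_all.2 fun _ =>
    (Measure.tendsto_eval_ae_ae (μ := fun _ : Fin N => vertexMeasure α R)).eventually
      (ae_vertexMeasure_radius_nonneg hα)

end Configuration

lemma coshDist_le_cosh_add {p q : ℝ × ℝ} (hp : 0 ≤ p.1) (hq : 0 ≤ q.1) :
    coshDist p q ≤ cosh (p.1 + q.1) := by
  have hsinh : 0 ≤ sinh p.1 * sinh q.1 := mul_nonneg (sinh_nonneg_iff.2 hp) (sinh_nonneg_iff.2 hq)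
  rw [coshDist, cosh_add]
  nlinarith [neg_one_le_cos (p.2 - q.2)]

lemma hypGraph_adj_of_add_le {N : ℕ} {R : ℝ} {pos : Fin N → ℝ × ℝ} {i j : Fin N} (hij : i ≠ j)
    (hi : 0 ≤ (pos i).1) (hj : 0 ≤ (pos j).1) (hR : (pos i).1 + (pos j).1 ≤ R) :
    (hypGraph N R pos).Adj i j :=
  ⟨hij, (coshDist_le_cosh_add hi hj).trans
    (cosh_strictMonoOn.monotoneOn (add_nonneg hi hj) (add_nonneg hi hj |>.trans hR) hR)⟩

lemma sub_le_radiusCDF {α R : ℝ} (hα : 0 < α) (hR : 0 < R) (ρ : ℝ) :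
    exp (α * ρ - α * R) / 2 - exp (-(α * R)) ≤ radiusCDF α R ρ := by
  have hαR : 0 ≤ α * R := by positivity
  have hnum : exp (α * ρ) / 2 - 1 ≤ cosh (α * ρ) - 1 := by
    linarith [cosh_eq (α * ρ), exp_pos (-(α * ρ))]
  have hden : cosh (α * R) - 1 ≤ exp (α * R) := by
    linarith [cosh_eq (α * R), exp_le_exp.2 (neg_le_self hαR), exp_pos (-(α * R))]
  calc exp (α * ρ - α * R) / 2 - exp (-(α * R)) = (exp (α * ρ) / 2 - 1) / exp (α * R) := by
        rw [exp_sub, exp_neg]; field_simp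
    _ ≤ radiusCDF α R ρ := div_le_div₀ (sub_nonneg.2 (one_le_cosh _)) hnum
        (cosh_mul_sub_one_pos hα hR) hden

section Rof

variable {ν : ℝ}

lemma tendsto_Rof_atTop (hν : 0 < ν) : Tendsto (Rof ν) atTop atTop :=
  (tendsto_log_atTop.comp (tendsto_natCast_atTop_atTop.atTop_div_const hν)).const_mul_atTop two_pos

lemma exp_Rof_div_two (hν : 0 < ν) {N : ℕ} (hN : 0 < N) : exp (Rof ν N / 2) = N / ν := by
  rw [Rof, mul_div_cancel_left₀ _ two_ne_zero, exp_log (by positivity)]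

lemma natCast_mul_exp_neg_mul_Rof_le {α : ℝ} (hα : 1 / 2 ≤ α) (hν : 0 < ν) {N : ℕ} (hN : 1 ≤ N) :
    N * exp (-(α * Rof ν N)) ≤ ν ^ (2 * α) := by
  have hN0 : (0 : ℝ) < N := by exact_mod_cast hN
  have hlogN : 0 ≤ log N := log_nonneg (by exact_mod_cast hN)
  calc (N : ℝ) * exp (-(α * Rof ν N)) = exp ((1 - 2 * α) * log N) * ν ^ (2 * α) := by
        rw [Rof, log_div hN0.ne' hν.ne', rpow_def_of_pos hν, ← exp_log hN0, ← exp_add, ← exp_add,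
          log_exp]
        ring_nf
    _ ≤ 1 * ν ^ (2 * α) := by
        gcongr
        exact exp_le_one_iff.2 (mul_nonpos_of_nonpos_of_nonneg (by linarith) hlogN)
    _ = ν ^ (2 * α) := one_mul _

lemma sub_le_natCast_mul_radiusCDF {α : ℝ} (hα : 1 / 2 ≤ α) (hν : 0 < ν) {N : ℕ} (hN : 1 ≤ N)
    (hR : 0 < Rof ν N) (ω : ℝ) :
    ν * exp (α * ω) / 2 - ν ^ (2 * α)
      ≤ N * radiusCDF α (Rof ν N) ((2 * α - 1) * Rof ν N / (2 * α) + ω) := by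
  have hα0 : 0 < α := by linarith
  have hN0 : (0 : ℝ) < N := by exact_mod_cast hN
  have hmain : N * exp (α * ((2 * α - 1) * Rof ν N / (2 * α) + ω) - α * Rof ν N)
      = ν * exp (α * ω) := by
    rw [show α * ((2 * α - 1) * Rof ν N / (2 * α) + ω) - α * Rof ν N = α * ω - Rof ν N / 2 by
        field_simp; ring,
      exp_sub, exp_Rof_div_two hν (by exact_mod_cast hN)]
    field_simp
  calc ν * exp (α * ω) / 2 - ν ^ (2 * α)
      ≤ N * exp (α * ((2 * α - 1) * Rof ν N / (2 * α) + ω) - α * Rof ν N) / 2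
          - N * exp (-(α * Rof ν N)) := by
        rw [hmain]; linarith [natCast_mul_exp_neg_mul_Rof_le hα hν hN]
    _ = N * (exp (α * ((2 * α - 1) * Rof ν N / (2 * α) + ω) - α * Rof ν N) / 2
          - exp (-(α * Rof ν N))) := by ring
    _ ≤ _ := by gcongr; exact sub_le_radiusCDF hα0 hR _

end Rof

lemma tendsto_one_sub_ofReal_exp_neg {ι : Type*} {l : Filter ι} {D : ι → ℝ}
    (hD : Tendsto D l atTop) : Tendsto (fun i => 1 - ENNReal.ofReal (exp (-D i))) l (nhds 1) := by
  have h := ENNReal.continuous_ofReal.tendsto 0 |>.comp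
    (tendsto_exp_atBot.comp (tendsto_neg_atBot_iff.2 hD))
  simpa using ENNReal.Tendsto.sub tendsto_const_nhds h (Or.inl ENNReal.one_ne_top)

theorem core_dominating_vertex_general
    (α ν : ℝ) (hα₁ : 1 / 2 < α) (hν : 0 < ν)
    (ω : ℕ → ℝ) (hω₁ : Tendsto ω atTop atTop) :
    Tendsto
      (fun N : ℕ =>
        configMeasure α ν N
          {pos | ∃ i : Fin N,
            (pos i).1 ≤ (2 * α - 1) * Rof ν N / (2 * α) + ω N ∧
            ∀ j : Fin N, j ≠ i →
              (2 * α - 1) * Rof ν N / (2 * α) + ω N ≤ Rof ν N - (pos j).1 →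
              (hypGraph N (Rof ν N) pos).Adj i j})
      atTop (nhds 1) := by
  have hα : 0 < α := by linarith
  set D : ℕ → ℝ := fun N => ν * exp (α * ω N) / 2 - ν ^ (2 * α)
  have hD : Tendsto D atTop atTop := tendsto_atTop_add_const_right _ _
    (((tendsto_exp_atTop.comp (hω₁.const_mul_atTop hα)).const_mul_atTop hν).atTop_div_const
      two_pos)
  have hR := tendsto_Rof_atTop hν
  refine tendsto_of_tendsto_of_tendsto_of_le_of_le' (tendsto_one_sub_ofReal_exp_neg hD)
    tendsto_const_nhds ?_ ?_
  · filter_upwards [eventually_ge_atTop 1, hR.eventually_gt_atTop 0, hω₁.eventually_ge_atTop 0]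
      with N hN hRN hωN
    have hρ : 0 ≤ (2 * α - 1) * Rof ν N / (2 * α) + ω N :=
      add_nonneg (div_nonneg (mul_nonneg (by linarith) hRN.le) (by positivity)) hωN
    calc 1 - ENNReal.ofReal (exp (-D N))
        ≤ 1 - ENNReal.ofReal (exp (-(N * radiusCDF α (Rof ν N)
            ((2 * α - 1) * Rof ν N / (2 * α) + ω N)))) := by
          gcongr
          exact sub_le_natCast_mul_radiusCDF hα₁.le hν hN hRN (ω N)
      _ ≤ configMeasure α ν N {pos | ∃ i, (pos i).1 ≤ (2 * α - 1) * Rof ν N / (2 * α) + ω N} :=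
          one_sub_exp_le_pi_exists_radius_le hα hRN hρ N
      _ ≤ _ := measure_mono_ae <| by
          filter_upwards [ae_pi_radius_nonneg hα.le N] with pos hpos ⟨i, hi⟩
          exact ⟨i, hi, fun j hji hj => hypGraph_adj_of_add_le hji.symm (hpos i) (hpos j)
            (by linarith)⟩
  · filter_upwards [hR.eventually_gt_atTop 0] with N hRN
    have := isProbabilityMeasure_vertexMeasure hα hRN
    exact prob_le_one (μ := Measure.pi fun _ : Fin N => vertexMeasure α (Rof ν N))

/-- Lemma 3.2 of the paper: for `1/2 < α < 1`, a.a.s. `G(N; α, ν)` contains a vertex of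
radius at most `(2α-1)R/(2α) + ω(N)` (hence of type at least `R/2`, a core vertex),
which is adjacent to every other vertex of type at least `(2α-1)R/(2α) + ω(N)`. -/
theorem core_dominating_vertex
    (α ν : ℝ) (hα₁ : 1 / 2 < α) (hα₂ : α < 1) (hν : 0 < ν)
    (ω : ℕ → ℝ) (hω₁ : Tendsto ω atTop atTop)
    (hω₂ : Tendsto (fun N => ω N / Rof ν N) atTop (nhds 0)) :
    Tendsto
      (fun N : ℕ =>
        configMeasure α ν N
          {pos | ∃ i : Fin N,
            (pos i).1 ≤ (2 * α - 1) * Rof ν N / (2 * α) + ω N ∧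
            ∀ j : Fin N, j ≠ i →
              (2 * α - 1) * Rof ν N / (2 * α) + ω N ≤ Rof ν N - (pos j).1 →
              (hypGraph N (Rof ν N) pos).Adj i j})
      atTop (nhds 1) :=
  core_dominating_vertex_general α ν hα₁ hν ω hω₁
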